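/- arXiv:1404.0605 — 4 statements merged into one kernel-verified Lean document; each statement's English description precedes it below -/
import Mathlib

section
/- Let j be a natural number and a a positive integer. If the a-th bit of j equals the (a+1)-th bit of j (bits counted from 1, so Bit(j,k) = ⌊j/2^(k-1)⌋ mod 2), then ⌊(j + 2^(a-1)) / 2^a⌋ = 2 · ⌊(j + 2^a) / 2^(a+1)⌋. -/
theorem shift_of_bits_eq (j a : ℕ) (ha : 0 < a)
    (hbits : j / 2 ^ (a - 1) % 2 = j / 2 ^ a % 2) :
    (j + 2 ^ (a - 1)) / 2 ^ a = 2 * ((j + 2 ^ a) / 2 ^ (a + 1)) := by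
  obtain ⟨b, rfl⟩ : ∃ b, a = b + 1 := ⟨a - 1, by omega⟩
  simp only [Nat.add_sub_cancel] at *
  have hp : 0 < 2 ^ b := Nat.pow_pos (by norm_num)
  have h1 : 2 ^ (b + 1) = 2 ^ b * 2 := by ring
  have h2 : 2 ^ (b + 1 + 1) = 2 ^ b * 4 := by ring
  have e1 : (j + 2 ^ b) / 2 ^ b = j / 2 ^ b + 1 := Nat.add_div_right _ hp
  have e2 : (j + 2 ^ (b + 1)) / 2 ^ b = j / 2 ^ b + 2 := by
    rw [h1, Nat.add_mul_div_left _ _ hp]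
  have g1 : (j + 2 ^ b) / 2 ^ (b + 1) = (j / 2 ^ b + 1) / 2 := by
    rw [h1, ← Nat.div_div_eq_div_mul, e1]
  have g2 : (j + 2 ^ (b + 1)) / 2 ^ (b + 1 + 1) = (j / 2 ^ b + 2) / 4 := by
    rw [h2, ← Nat.div_div_eq_div_mul, e2]
  have hb : j / 2 ^ (b + 1) = j / 2 ^ b / 2 := by
    rw [h1, Nat.div_div_eq_div_mul]
  rw [hb] at hbits
  rw [g1, g2]
  omega
end

section
/- Let j be a natural number and a a positive integer. If the a-th bit of j differs from the (a+1)-th bit of j, then 1 + 2 · ⌊j / 2^(a+1)⌋ = ⌊(j + 2^(a-1)) / 2^a⌋. -/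
theorem shift_of_bits_ne (j a : ℕ) (ha : 0 < a)
    (hbits : j / 2 ^ (a - 1) % 2 ≠ j / 2 ^ a % 2) :
    1 + 2 * (j / 2 ^ (a + 1)) = (j + 2 ^ (a - 1)) / 2 ^ a := by
  obtain ⟨b, rfl⟩ : ∃ b, a = b + 1 := ⟨a - 1, by omega⟩
  simp only [Nat.add_sub_cancel] at hbits ⊢
  have h1 : j / 2 ^ (b + 1) = j / 2 ^ b / 2 := by
    rw [pow_succ, ← Nat.div_div_eq_div_mul]
  have h2 : j / 2 ^ (b + 1 + 1) = j / 2 ^ b / 4 := by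
    rw [show (2:ℕ) ^ (b + 1 + 1) = 2 ^ b * 4 by ring, ← Nat.div_div_eq_div_mul]
  have h3 : (j + 2 ^ b) / 2 ^ (b + 1) = (j / 2 ^ b + 1) / 2 := by
    rw [pow_succ, ← Nat.div_div_eq_div_mul, Nat.add_div_right _ (Nat.pow_pos (by norm_num : 0 < 2))]
  rw [h1] at hbits
  rw [h2, h3]
  omega
end

section
/- For every natural number j and positive integer i, if Bit(j, i) ≠ Bit(j, i+1), then 2^i + ⌊j/2^(i+1)⌋ · 2^(i+1) = ⌊(j + 2^(i-1)) / 2^i⌋ · 2^i. -/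
theorem X_eq_Y_of_bits_ne (j i : ℕ) (hi : 0 < i)
    (hbits : j / 2 ^ (i - 1) % 2 ≠ j / 2 ^ i % 2) :
    2 ^ i + j / 2 ^ (i + 1) * 2 ^ (i + 1) = (j + 2 ^ (i - 1)) / 2 ^ i * 2 ^ i := by
  obtain ⟨k, rfl⟩ : ∃ k, i = k + 1 := ⟨i - 1, by omega⟩
  have hk : k + 1 - 1 = k := rfl
  set p := 2 ^ k with hp
  have hp0 : 0 < p := Nat.pow_pos (by norm_num)
  have h1 : (2 : ℕ) ^ (k + 1) = p * 2 := by rw [pow_succ]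
  have h2 : (2 : ℕ) ^ (k + 1 + 1) = p * 4 := by rw [pow_succ, pow_succ]; ring
  rw [hk] at hbits ⊢
  rw [h1, h2, ← Nat.div_div_eq_div_mul, ← Nat.div_div_eq_div_mul, ← hp,
    Nat.add_div_right _ hp0]
  rw [h1, ← Nat.div_div_eq_div_mul] at hbits
  generalize j / p = a at hbits ⊢
  have key : 2 + a / 4 * 4 = (a + 1) / 2 * 2 := by omega
  nlinarith [key]
end

section
/- For every natural number j and positive integer i, if Bit(j, i) = Bit(j, i+1), then ⌊(j + 2^(i-1))/2^i⌋ · 2^i = ⌊(j + 2^i)/2^(i+1)⌋ · 2^(i+1). -/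
theorem Y_stable_of_bits_eq (j i : ℕ) (hi : 0 < i)
    (hbits : j / 2 ^ (i - 1) % 2 = j / 2 ^ i % 2) :
    (j + 2 ^ (i - 1)) / 2 ^ i * 2 ^ i = (j + 2 ^ i) / 2 ^ (i + 1) * 2 ^ (i + 1) := by
  obtain ⟨k, rfl⟩ : ∃ k, i = k + 1 := ⟨i - 1, by omega⟩
  have hk : k + 1 - 1 = k := rfl
  set p := 2 ^ k with hp
  have hp0 : 0 < p := Nat.pow_pos (by norm_num)
  have e1 : (2 : ℕ) ^ (k + 1) = 2 * p := by rw [hp, pow_succ]; ring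
  have e2 : (2 : ℕ) ^ (k + 1 + 1) = 4 * p := by rw [hp, pow_succ, pow_succ]; ring
  rw [hk, e1, e2]
  have hA : (j + p) / (2 * p) = (j / p + 1) / 2 := by
    rw [mul_comm, ← Nat.div_div_eq_div_mul,
      show j + p = j + 1 * p by ring, Nat.add_mul_div_right _ _ hp0]
  have hB : (j + 2 * p) / (4 * p) = (j / p + 2) / 4 := by
    rw [show (4 : ℕ) * p = p * 4 by ring, ← Nat.div_div_eq_div_mul,
      show j + 2 * p = j + 2 * p by ring, Nat.add_mul_div_right _ _ hp0]
  have hC : j / (2 * p) = j / p / 2 := by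
    rw [mul_comm, ← Nat.div_div_eq_div_mul]
  rw [hk, e1] at hbits
  rw [hC] at hbits
  rw [hA, hB]
  set a := j / p with ha
  have gen : ∀ n : ℕ, n % 2 = n / 2 % 2 → (n + 1) / 2 * 2 = (n + 2) / 4 * 4 := by
    intro n h
    obtain ⟨q, r, hr, rfl⟩ : ∃ q r, r < 4 ∧ n = 4 * q + r :=
      ⟨n / 4, n % 4, Nat.mod_lt _ (by norm_num), (Nat.div_add_mod n 4).symm⟩
    interval_cases r <;> omega
  have key : (a + 1) / 2 * 2 = (a + 2) / 4 * 4 := gen a hbits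
  calc (a + 1) / 2 * (2 * p) = ((a + 1) / 2 * 2) * p := by ring
    _ = ((a + 2) / 4 * 4) * p := by rw [key]
    _ = (a + 2) / 4 * (4 * p) := by ring
end
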